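/- arXiv:2307.08868 — 4 statements merged into one kernel-verified Lean document; each statement's English description precedes it below -/
import Mathlib

section
/- Let n ≥ 2, let (θ_{i,j})_{i,j≥1} be a coagulation kernel, and let f^n = (f_i^n)_{1≤i≤n} be the nonnegative global solution of the truncated RBK system with nonnegative initial data. Then for all 0 ≤ t1 ≤ t2 < ∞, Σ_{i=1}^{n} i^{1/2} f_i^n(t2) + (1/2) ∫_{t1}^{t2} Σ_{i=1}^{n} Σ_{j=1}^{n} min{i,j}^{1/2} θ_{i,j} f_i^n(s) f_j^n(s) ds ≤ Σ_{i=1}^{n} i^{1/2} f_i^n(t1); in particular t ↦ Σ_{i=1}^{n} i^{1/2} f_i^n(t) is nonincreasing. -/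
open MeasureTheory Finset Filter

/-! Testing the system against the weight `w i = √i` and symmetrising in `(i, j)` gives
`d/dt ∑ √i f_i = ½ ∑_{i,j} θ_{ij} f_i f_j (√|i - j| - √i - √j)`, and `√|i - j| ≤ √(max i j)`
bounds the bracket by `-√(min i j)`. Integrating this differential inequality gives the estimate;
its integral term is nonnegative, whence the monotonicity. -/

/-- `IsTruncRBKOn θ n I f` : the family `(f i)_{1 ≤ i ≤ n}` solves the truncated
Redner–Ben-Avraham–Kahng coagulation system of size `n` with kernel `θ` on the set `I`:
`df_i/dt = ∑_{j=1}^{n-i} θ_{i+j,j} f_{i+j} f_j − ∑_{j=1}^{n} θ_{i,j} f_i f_j`. -/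
def IsTruncRBKOn (θ : ℕ → ℕ → ℝ) (n : ℕ) (I : Set ℝ) (f : ℕ → ℝ → ℝ) : Prop :=
  ∀ i ∈ Finset.Icc 1 n, ∀ t ∈ I,
    HasDerivWithinAt (f i)
      ((∑ j ∈ Finset.Icc 1 (n - i), θ (i + j) j * f (i + j) t * f j t)
        - ∑ j ∈ Finset.Icc 1 n, θ i j * f i t * f j t) I t

theorem sum_Icc_sum_Icc_sub_eq_sum_ite {M : Type*} [AddCommMonoid M] (n : ℕ) (g : ℕ → ℕ → M) :
    ∑ i ∈ Icc 1 n, ∑ j ∈ Icc 1 (n - i), g i j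
      = ∑ k ∈ Icc 1 n, ∑ j ∈ Icc 1 n, if j < k then g (k - j) j else 0 := by
  rw [sum_comm' (t' := Icc 1 n) (s' := fun j => Icc 1 (n - j)) (by simp only [mem_Icc]; omega),
    sum_comm]
  refine sum_congr rfl fun j _ => ?_
  rw [← sum_filter]
  refine sum_nbij' (· + j) (· - j) ?_ ?_ ?_ ?_ fun i _ => by rw [Nat.add_sub_cancel]
  all_goals intro i hi; simp only [mem_filter, mem_Icc] at hi ⊢; omega

theorem sqrt_natSub_add_sqrt_natSub_add_sqrt_min_le (i j : ℕ) :
    √((i - j : ℕ) : ℝ) + √((j - i : ℕ) : ℝ) + √(min (i : ℝ) j) ≤ √(i : ℝ) + √(j : ℝ) := by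
  wlog hji : j ≤ i
  · have := this j i (by omega)
    rw [min_comm]
    linarith
  have hsub : √((i - j : ℕ) : ℝ) ≤ √(i : ℝ) := Real.sqrt_le_sqrt (by exact_mod_cast Nat.sub_le i j)
  rw [Nat.sub_eq_zero_of_le hji, min_eq_right (by exact_mod_cast hji)]
  simp [hsub]

def truncRBKRate (θ : ℕ → ℕ → ℝ) (n : ℕ) (a : ℕ → ℝ) (i : ℕ) : ℝ :=
  (∑ j ∈ Icc 1 (n - i), θ (i + j) j * a (i + j) * a j) - ∑ j ∈ Icc 1 n, θ i j * a i * a j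

/-- For `i ≤ j` the truncated subtraction gives `w (i - j) = w 0 = 0`, so only gains survive. -/
theorem sum_mul_truncRBKRate (θ : ℕ → ℕ → ℝ) (n : ℕ) (a w : ℕ → ℝ) (hw : w 0 = 0) :
    ∑ i ∈ Icc 1 n, w i * truncRBKRate θ n a i
      = ∑ i ∈ Icc 1 n, ∑ j ∈ Icc 1 n, (w (i - j) - w i) * (θ i j * a i * a j) := by
  have hgain : ∑ i ∈ Icc 1 n, w i * ∑ j ∈ Icc 1 (n - i), θ (i + j) j * a (i + j) * a j
      = ∑ i ∈ Icc 1 n, ∑ j ∈ Icc 1 n, w (i - j) * (θ i j * a i * a j) := by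
    simp only [mul_sum]
    rw [sum_Icc_sum_Icc_sub_eq_sum_ite]
    refine sum_congr rfl fun i _ => sum_congr rfl fun j _ => ?_
    split_ifs with hji
    · rw [Nat.sub_add_cancel hji.le]
    · rw [Nat.sub_eq_zero_of_le (not_lt.mp hji), hw, zero_mul]
  simp only [truncRBKRate, mul_sub, sub_mul, sum_sub_distrib, hgain]
  simp only [mul_sum, mul_assoc]

theorem sum_sqrt_mul_truncRBKRate_le (θ : ℕ → ℕ → ℝ)
    (hθ_nonneg : ∀ i j : ℕ, 1 ≤ i → 1 ≤ j → 0 ≤ θ i j)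
    (hθ_symm : ∀ i j : ℕ, 1 ≤ i → 1 ≤ j → θ i j = θ j i)
    (n : ℕ) (a : ℕ → ℝ) (ha : ∀ i ∈ Icc 1 n, 0 ≤ a i) :
    ∑ i ∈ Icc 1 n, √(i : ℝ) * truncRBKRate θ n a i
      ≤ -(1 / 2) * ∑ i ∈ Icc 1 n, ∑ j ∈ Icc 1 n, √(min (i : ℝ) j) * θ i j * a i * a j := by
  set X : ℕ → ℕ → ℝ := fun i j => θ i j * a i * a j with hX
  have hX_symm : ∀ i ∈ Icc 1 n, ∀ j ∈ Icc 1 n, X j i = X i j := by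
    intro i hi j hj
    rw [mem_Icc] at hi hj
    simp only [hX, hθ_symm j i hj.1 hi.1]
    ring
  have hX_nonneg : ∀ i ∈ Icc 1 n, ∀ j ∈ Icc 1 n, 0 ≤ X i j := fun i hi j hj =>
    mul_nonneg (mul_nonneg (hθ_nonneg i j (mem_Icc.mp hi).1 (mem_Icc.mp hj).1) (ha i hi)) (ha j hj)
  have hswap : ∑ i ∈ Icc 1 n, ∑ j ∈ Icc 1 n, (√((j - i : ℕ) : ℝ) - √(j : ℝ)) * X i j
      = ∑ i ∈ Icc 1 n, ∑ j ∈ Icc 1 n, (√((i - j : ℕ) : ℝ) - √(i : ℝ)) * X i j := by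
    rw [sum_comm]
    exact sum_congr rfl fun i hi => sum_congr rfl fun j hj => by rw [hX_symm j hj i hi]
  rw [sum_mul_truncRBKRate θ n a (fun i => √(i : ℝ)) (by simp)]
  calc ∑ i ∈ Icc 1 n, ∑ j ∈ Icc 1 n, (√((i - j : ℕ) : ℝ) - √(i : ℝ)) * X i j
      = (1 / 2) * ∑ i ∈ Icc 1 n, ∑ j ∈ Icc 1 n,
          ((√((i - j : ℕ) : ℝ) - √(i : ℝ)) * X i j + (√((j - i : ℕ) : ℝ) - √(j : ℝ)) * X i j) := by
        simp only [sum_add_distrib, hswap]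
        ring
    _ ≤ (1 / 2) * ∑ i ∈ Icc 1 n, ∑ j ∈ Icc 1 n, -√(min (i : ℝ) j) * X i j := by
        refine mul_le_mul_of_nonneg_left
          (sum_le_sum fun i hi => sum_le_sum fun j hj => ?_) (by norm_num)
        rw [← add_mul]
        exact mul_le_mul_of_nonneg_right
          (by linarith [sqrt_natSub_add_sqrt_natSub_add_sqrt_min_le i j]) (hX_nonneg i hi j hj)
    _ = -(1 / 2) * ∑ i ∈ Icc 1 n, ∑ j ∈ Icc 1 n, √(min (i : ℝ) j) * θ i j * a i * a j := by
        simp only [hX, neg_mul, sum_neg_distrib, mul_assoc]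
        ring

theorem IsTruncRBKOn.continuousOn {θ : ℕ → ℕ → ℝ} {n : ℕ} {I : Set ℝ} {f : ℕ → ℝ → ℝ}
    (hf : IsTruncRBKOn θ n I f) {i : ℕ} (hi : i ∈ Icc 1 n) : ContinuousOn (f i) I :=
  fun t ht => (hf i hi t ht).continuousWithinAt

theorem IsTruncRBKOn.hasDerivWithinAt_sum_mul {θ : ℕ → ℕ → ℝ} {n : ℕ} {I : Set ℝ}
    {f : ℕ → ℝ → ℝ} (hf : IsTruncRBKOn θ n I f) (w : ℕ → ℝ) {t : ℝ} (ht : t ∈ I) :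
    HasDerivWithinAt (fun s => ∑ i ∈ Icc 1 n, w i * f i s)
      (∑ i ∈ Icc 1 n, w i * truncRBKRate θ n (f · t) i) I t :=
  HasDerivWithinAt.fun_sum fun i hi => (hf i hi t ht).const_mul (w i)

theorem truncRBK_half_moment_estimate_general
    (θ : ℕ → ℕ → ℝ)
    (hθ_nonneg : ∀ i j : ℕ, 1 ≤ i → 1 ≤ j → 0 ≤ θ i j)
    (hθ_symm : ∀ i j : ℕ, 1 ≤ i → 1 ≤ j → θ i j = θ j i)
    (n : ℕ)
    (f : ℕ → ℝ → ℝ) (hf : IsTruncRBKOn θ n (Set.Ici 0) f)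
    (hf_nonneg : ∀ i ∈ Finset.Icc 1 n, ∀ t ∈ Set.Ici (0:ℝ), 0 ≤ f i t)
    (t1 t2 : ℝ) (ht1 : 0 ≤ t1) (ht12 : t1 ≤ t2) :
    (∑ i ∈ Finset.Icc 1 n, Real.sqrt i * f i t2
        + (1 / 2) * ∫ s in t1..t2,
            ∑ i ∈ Finset.Icc 1 n, ∑ j ∈ Finset.Icc 1 n,
              Real.sqrt (min i j) * θ i j * f i s * f j s
      ≤ ∑ i ∈ Finset.Icc 1 n, Real.sqrt i * f i t1)
    ∧ (∑ i ∈ Finset.Icc 1 n, Real.sqrt i * f i t2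
        ≤ ∑ i ∈ Finset.Icc 1 n, Real.sqrt i * f i t1) := by
  set H : ℝ → ℝ := fun s => ∑ i ∈ Icc 1 n, ∑ j ∈ Icc 1 n,
    √(min (i : ℝ) j) * θ i j * f i s * f j s
  have hI : Set.Icc t1 t2 ⊆ Set.Ici 0 := fun s hs => ht1.trans hs.1
  have hH_cont : ContinuousOn H (Set.Icc t1 t2) :=
    continuousOn_finsetSum _ fun i hi => continuousOn_finsetSum _ fun j hj =>
      ((continuousOn_const.mul (hf.continuousOn hi)).mul (hf.continuousOn hj)).mono hI
  have hH_nonneg : 0 ≤ ∫ s in t1..t2, H s :=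
    intervalIntegral.integral_nonneg ht12 fun s hs =>
      sum_nonneg fun i hi => sum_nonneg fun j hj =>
        mul_nonneg (mul_nonneg (mul_nonneg (Real.sqrt_nonneg _)
          (hθ_nonneg i j (mem_Icc.mp hi).1 (mem_Icc.mp hj).1)) (hf_nonneg i hi s (hI hs)))
          (hf_nonneg j hj s (hI hs))
  have hdecay := intervalIntegral.sub_le_integral_of_hasDeriv_right_of_le ht12
    (φ := fun s => -(1 / 2) * H s)
    (fun s hs =>
      (hf.hasDerivWithinAt_sum_mul (fun i => √(i : ℝ)) (hI hs)).continuousWithinAt.mono hI)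
    (fun s hs => (hf.hasDerivWithinAt_sum_mul _ (hI (Set.Ioo_subset_Icc_self hs))).mono
      fun u hu => ht1.trans (hs.1.trans hu).le)
    (continuousOn_const.mul hH_cont).integrableOn_Icc
    (fun s hs => sum_sqrt_mul_truncRBKRate_le θ hθ_nonneg hθ_symm n (f · s)
      fun i hi => hf_nonneg i hi s (hI (Set.Ioo_subset_Icc_self hs)))
  rw [intervalIntegral.integral_const_mul] at hdecay
  exact ⟨by linarith, by linarith⟩

/-- For the nonnegative global solution of the truncated RBK system,
`∑_{i=1}^n √i f_i(t2) + (1/2) ∫_{t1}^{t2} ∑_{i=1}^n ∑_{j=1}^n √(min i j) θ_{i,j} f_i f_j ds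
   ≤ ∑_{i=1}^n √i f_i(t1)`; in particular `t ↦ ∑_{i=1}^n √i f_i(t)` is nonincreasing. -/
theorem truncRBK_half_moment_estimate
    (θ : ℕ → ℕ → ℝ)
    (hθ_nonneg : ∀ i j : ℕ, 1 ≤ i → 1 ≤ j → 0 ≤ θ i j)
    (hθ_symm : ∀ i j : ℕ, 1 ≤ i → 1 ≤ j → θ i j = θ j i)
    (n : ℕ) (hn : 2 ≤ n)
    (fin : ℕ → ℝ) (hfin : ∀ i ∈ Finset.Icc 1 n, 0 ≤ fin i)
    (f : ℕ → ℝ → ℝ) (hf : IsTruncRBKOn θ n (Set.Ici 0) f)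
    (hinit : ∀ i ∈ Finset.Icc 1 n, f i 0 = fin i)
    (hf_nonneg : ∀ i ∈ Finset.Icc 1 n, ∀ t ∈ Set.Ici (0:ℝ), 0 ≤ f i t)
    (t1 t2 : ℝ) (ht1 : 0 ≤ t1) (ht12 : t1 ≤ t2) :
    (∑ i ∈ Finset.Icc 1 n, Real.sqrt i * f i t2
        + (1 / 2) * ∫ s in t1..t2,
            ∑ i ∈ Finset.Icc 1 n, ∑ j ∈ Finset.Icc 1 n,
              Real.sqrt (min i j) * θ i j * f i s * f j s
      ≤ ∑ i ∈ Finset.Icc 1 n, Real.sqrt i * f i t1)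
    ∧ (∑ i ∈ Finset.Icc 1 n, Real.sqrt i * f i t2
        ≤ ∑ i ∈ Finset.Icc 1 n, Real.sqrt i * f i t1) :=
  truncRBK_half_moment_estimate_general θ hθ_nonneg hθ_symm n f hf hf_nonneg t1 t2 ht1 ht12
end

section
/- Let n ≥ 2, let (θ_{i,j})_{i,j≥1} be a coagulation kernel satisfying (K1), and let f^n = (f_i^n)_{1≤i≤n} be the nonnegative global solution of the truncated RBK system with nonnegative initial data. Then for all 1 ≤ r1 ≤ r2 ≤ n and 0 ≤ t1 ≤ t2 < ∞, ∫_{t1}^{t2} ( Σ_{i=r1}^{r2} ω_i f_i^n(s) )^2 ds ≤ 2 r1^{−1/2} Σ_{i=1}^{n} i^{1/2} f_i^n(t1). -/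
open MeasureTheory Finset Filter

/-!
The moment `M(t) = ∑ᵢ √i fᵢ(t)` is nonnegative and dissipates. A collision of sizes `j ≤ k`
removes both clusters and creates one of size `k - j`; since `√(k - j) ≤ √k`, the created
cluster at most compensates the loss of the larger one, so `M' ≤ -∑_{j ≤ k} √j θ_{j,k} f_j f_k`.
Keeping only `r₁ ≤ j ≤ k ≤ r₂` and using `θ_{j,k} ≥ ω_j ω_k` and `√j ≥ √r₁`, this is at most
`-(√r₁ / 2) (∑_{r₁ ≤ i ≤ r₂} ωᵢ fᵢ)²`; integrating over `[t₁, t₂]` gives the estimate.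
-/

theorem sum_sum_eq_sum_lt_add_sum_le_swap {α M : Type*} [LinearOrder α] [AddCommMonoid M]
    (s : Finset α) (g : α → α → M) :
    ∑ i ∈ s, ∑ j ∈ s, g i j
      = ∑ i ∈ s, ∑ j ∈ s with j < i, g i j + ∑ i ∈ s, ∑ j ∈ s with j ≤ i, g j i := by
  have hswap : ∑ i ∈ s, ∑ j ∈ s with ¬j < i, g i j = ∑ j ∈ s, ∑ i ∈ s with i ≤ j, g i j :=
    sum_comm' fun i j => by simp only [mem_filter, not_lt]; tauto
  rw [← sum_add_distrib.trans (congrArg _ hswap)]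
  exact sum_congr rfl fun i _ => (sum_filter_add_sum_filter_not s _ _).symm

theorem sq_sum_le_two_mul_sum_sum_le {α R : Type*} [LinearOrder α] [CommSemiring R]
    [PartialOrder R] [IsOrderedRing R] {s : Finset α} {a : α → R} (ha : ∀ i ∈ s, 0 ≤ a i) :
    (∑ i ∈ s, a i) ^ 2 ≤ 2 * ∑ i ∈ s, ∑ j ∈ s with j ≤ i, a i * a j := by
  have hlt : ∑ i ∈ s, ∑ j ∈ s with j < i, a i * a j ≤ ∑ i ∈ s, ∑ j ∈ s with j ≤ i, a i * a j :=
    sum_le_sum fun i hi => sum_le_sum_of_subset_of_nonneg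
      (monotone_filter_right s fun _ _ => le_of_lt)
      fun j hj _ => mul_nonneg (ha i hi) (ha j (mem_filter.1 hj).1)
  calc (∑ i ∈ s, a i) ^ 2 = ∑ i ∈ s, ∑ j ∈ s, a i * a j := by rw [sq, sum_mul_sum]
    _ = ∑ i ∈ s, ∑ j ∈ s with j < i, a i * a j + ∑ i ∈ s, ∑ j ∈ s with j ≤ i, a i * a j := by
      rw [sum_sum_eq_sum_lt_add_sum_le_swap]; simp only [mul_comm]
    _ ≤ 2 * ∑ i ∈ s, ∑ j ∈ s with j ≤ i, a i * a j := by rw [two_mul]; gcongr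

theorem sum_Icc_sum_Icc_eq_sum_sum_lt {M : Type*} [AddCommMonoid M] (n : ℕ) (H : ℕ → ℕ → ℕ → M) :
    ∑ i ∈ Icc 1 n, ∑ j ∈ Icc 1 (n - i), H i (i + j) j
      = ∑ k ∈ Icc 1 n, ∑ j ∈ Icc 1 n with j < k, H (k - j) k j := by
  rw [sum_sigma', sum_sigma']
  refine sum_nbij' (fun p => ⟨p.1 + p.2, p.2⟩) (fun p => ⟨p.1 - p.2, p.2⟩) ?_ ?_ ?_ ?_ ?_
  all_goals
    intro p hp
    simp only [mem_sigma, mem_filter, mem_Icc] at hp ⊢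
  · omega
  · omega
  · exact Sigma.ext (by dsimp only; omega) HEq.rfl
  · exact Sigma.ext (by dsimp only; omega) HEq.rfl
  · simp

theorem integral_le_of_hasDerivWithinAt_le_neg {M M' g : ℝ → ℝ} {a b : ℝ} (hab : a ≤ b)
    (hM : ∀ t ∈ Set.Icc a b, HasDerivWithinAt M (M' t) (Set.Ici a) t)
    (hg : IntegrableOn g (Set.Icc a b)) (hM' : ∀ t ∈ Set.Ioo a b, M' t ≤ -g t) (hMb : 0 ≤ M b) :
    ∫ t in a..b, g t ≤ M a := by
  have hdiss := intervalIntegral.sub_le_integral_of_hasDeriv_right_of_le hab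
    (fun t ht => (hM t ht).continuousWithinAt.mono Set.Icc_subset_Ici_self)
    (fun t ht => (hM t (Set.Ioo_subset_Icc_self ht)).mono fun s hs => ht.1.le.trans hs.le)
    hg.neg hM'
  rw [show (-g) = fun t => -g t from rfl, intervalIntegral.integral_neg] at hdiss
  linarith

-- Unfolded, `IsTruncRBKOn θ n I f` says that `f i` has derivative `truncRBKField θ n (f · t) i`.
def truncRBKField (θ : ℕ → ℕ → ℝ) (n : ℕ) (x : ℕ → ℝ) (i : ℕ) : ℝ :=
  (∑ j ∈ Icc 1 (n - i), θ (i + j) j * x (i + j) * x j) - ∑ j ∈ Icc 1 n, θ i j * x i * x j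

theorem sum_mul_truncRBKField_le {θ : ℕ → ℕ → ℝ} {n : ℕ} {x φ : ℕ → ℝ} (hφ : Monotone φ)
    (hθ : ∀ i ∈ Icc 1 n, ∀ j ∈ Icc 1 n, 0 ≤ θ i j) (hx : ∀ i ∈ Icc 1 n, 0 ≤ x i) :
    ∑ i ∈ Icc 1 n, φ i * truncRBKField θ n x i
      ≤ -∑ i ∈ Icc 1 n, ∑ j ∈ Icc 1 n with j ≤ i, φ j * (θ j i * x j * x i) := by
  have hgain : ∑ i ∈ Icc 1 n, φ i * ∑ j ∈ Icc 1 (n - i), θ (i + j) j * x (i + j) * x j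
      ≤ ∑ i ∈ Icc 1 n, ∑ j ∈ Icc 1 n with j < i, φ i * (θ i j * x i * x j) := by
    simp_rw [mul_sum]
    rw [sum_Icc_sum_Icc_eq_sum_sum_lt n fun i k j => φ i * (θ k j * x k * x j)]
    gcongr with k hk j hj
    · have hj' := (mem_filter.1 hj).1
      exact mul_nonneg (mul_nonneg (hθ k hk j hj') (hx k hk)) (hx j hj')
    · exact hφ (Nat.sub_le k j)
  have hloss : ∑ i ∈ Icc 1 n, φ i * ∑ j ∈ Icc 1 n, θ i j * x i * x j
      = ∑ i ∈ Icc 1 n, ∑ j ∈ Icc 1 n with j < i, φ i * (θ i j * x i * x j)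
        + ∑ i ∈ Icc 1 n, ∑ j ∈ Icc 1 n with j ≤ i, φ j * (θ j i * x j * x i) := by
    simp_rw [mul_sum]
    exact sum_sum_eq_sum_lt_add_sum_le_swap _ fun i j => φ i * (θ i j * x i * x j)
  simp only [truncRBKField, mul_sub, sum_sub_distrib]
  linarith

theorem sqrt_mul_sq_sum_le_sum_sum_sqrt_mul {θ : ℕ → ℕ → ℝ} {ω x : ℕ → ℝ} {n r₁ r₂ : ℕ}
    (hr₁ : 1 ≤ r₁) (hr₂ : r₂ ≤ n) (hω : ∀ i ∈ Icc 1 n, 0 ≤ ω i)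
    (hθω : ∀ i ∈ Icc 1 n, ∀ j ∈ Icc 1 n, ω i * ω j ≤ θ i j) (hx : ∀ i ∈ Icc 1 n, 0 ≤ x i) :
    √r₁ / 2 * (∑ i ∈ Icc r₁ r₂, ω i * x i) ^ 2
      ≤ ∑ i ∈ Icc 1 n, ∑ j ∈ Icc 1 n with j ≤ i, √j * (θ j i * x j * x i) := by
  have hsub : Icc r₁ r₂ ⊆ Icc 1 n := Icc_subset_Icc hr₁ hr₂
  have hωx : ∀ i ∈ Icc r₁ r₂, 0 ≤ ω i * x i := fun i hi =>
    mul_nonneg (hω i (hsub hi)) (hx i (hsub hi))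
  have hterm : ∀ i ∈ Icc 1 n, ∀ j ∈ Icc 1 n, 0 ≤ √j * (θ j i * x j * x i) := fun i hi j hj =>
    mul_nonneg (Real.sqrt_nonneg _) (mul_nonneg (mul_nonneg
      ((mul_nonneg (hω j hj) (hω i hi)).trans (hθω j hj i hi)) (hx j hj)) (hx i hi))
  calc √r₁ / 2 * (∑ i ∈ Icc r₁ r₂, ω i * x i) ^ 2
      ≤ √r₁ / 2 * (2 * ∑ i ∈ Icc r₁ r₂, ∑ j ∈ Icc r₁ r₂ with j ≤ i, ω i * x i * (ω j * x j)) := by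
        gcongr; exact sq_sum_le_two_mul_sum_sum_le hωx
    _ = ∑ i ∈ Icc r₁ r₂, ∑ j ∈ Icc r₁ r₂ with j ≤ i, √r₁ * (ω j * ω i * x j * x i) := by
        simp_rw [mul_sum]
        exact sum_congr rfl fun i _ => sum_congr rfl fun j _ => by ring
    _ ≤ ∑ i ∈ Icc r₁ r₂, ∑ j ∈ Icc r₁ r₂ with j ≤ i, √j * (θ j i * x j * x i) := by
        gcongr with i hi j hj
        · have hj' := hsub (mem_filter.1 hj).1
          exact mul_nonneg (mul_nonneg (mul_nonneg (hω j hj') (hω i (hsub hi))) (hx j hj'))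
            (hx i (hsub hi))
        · exact (mem_Icc.1 (mem_filter.1 hj).1).1
        · exact hx i (hsub hi)
        · exact hx j (hsub (mem_filter.1 hj).1)
        · exact hθω j (hsub (mem_filter.1 hj).1) i (hsub hi)
    _ ≤ ∑ i ∈ Icc r₁ r₂, ∑ j ∈ Icc 1 n with j ≤ i, √j * (θ j i * x j * x i) :=
        sum_le_sum fun i hi => sum_le_sum_of_subset_of_nonneg (filter_subset_filter _ hsub)
          fun j hj _ => hterm i (hsub hi) j (mem_filter.1 hj).1
    _ ≤ ∑ i ∈ Icc 1 n, ∑ j ∈ Icc 1 n with j ≤ i, √j * (θ j i * x j * x i) :=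
        sum_le_sum_of_subset_of_nonneg hsub fun i hi _ =>
          sum_nonneg fun j hj => hterm i hi j (mem_filter.1 hj).1

theorem sum_sqrt_mul_truncRBKField_le {θ : ℕ → ℕ → ℝ} {ω x : ℕ → ℝ} {n r₁ r₂ : ℕ}
    (hr₁ : 1 ≤ r₁) (hr₂ : r₂ ≤ n) (hω : ∀ i ∈ Icc 1 n, 0 ≤ ω i)
    (hθω : ∀ i ∈ Icc 1 n, ∀ j ∈ Icc 1 n, ω i * ω j ≤ θ i j) (hx : ∀ i ∈ Icc 1 n, 0 ≤ x i) :
    ∑ i ∈ Icc 1 n, √i * truncRBKField θ n x i ≤ -(√r₁ / 2 * (∑ i ∈ Icc r₁ r₂, ω i * x i) ^ 2) :=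
  (sum_mul_truncRBKField_le (fun i j hij => Real.sqrt_le_sqrt (by exact_mod_cast hij))
    (fun i hi j hj => (mul_nonneg (hω i hi) (hω j hj)).trans (hθω i hi j hj)) hx).trans
    (neg_le_neg (sqrt_mul_sq_sum_le_sum_sum_sqrt_mul hr₁ hr₂ hω hθω hx))

theorem truncRBK_L2_omega_estimate_general
    (θ : ℕ → ℕ → ℝ) (ω : ℕ → ℝ) (κ : ℕ → ℕ → ℝ)
    -- (K1)
    (hK1 : ∀ i j : ℕ, 1 ≤ i → 1 ≤ j → θ i j = ω i * ω j + κ i j)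
    (hω_nonneg : ∀ i : ℕ, 1 ≤ i → 0 ≤ ω i)
    (hκ_nonneg : ∀ i j : ℕ, 1 ≤ i → 1 ≤ j → 0 ≤ κ i j)
    (n : ℕ)
    (f : ℕ → ℝ → ℝ) (hf : IsTruncRBKOn θ n (Set.Ici 0) f)
    (hf_nonneg : ∀ i ∈ Finset.Icc 1 n, ∀ t ∈ Set.Ici (0:ℝ), 0 ≤ f i t)
    (r1 r2 : ℕ) (hr1 : 1 ≤ r1) (hr2n : r2 ≤ n)
    (t1 t2 : ℝ) (ht1 : 0 ≤ t1) (ht12 : t1 ≤ t2) :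
    ∫ s in t1..t2, (∑ i ∈ Finset.Icc r1 r2, ω i * f i s) ^ 2
      ≤ 2 * (Real.sqrt r1)⁻¹ * ∑ i ∈ Finset.Icc 1 n, Real.sqrt i * f i t1 := by
  have hω : ∀ i ∈ Icc 1 n, 0 ≤ ω i := fun i hi => hω_nonneg i (mem_Icc.1 hi).1
  have hθω : ∀ i ∈ Icc 1 n, ∀ j ∈ Icc 1 n, ω i * ω j ≤ θ i j := fun i hi j hj => by
    rw [hK1 i j (mem_Icc.1 hi).1 (mem_Icc.1 hj).1]
    linarith [hκ_nonneg i j (mem_Icc.1 hi).1 (mem_Icc.1 hj).1]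
  have hmoment : ∀ t ∈ Set.Icc t1 t2, HasDerivWithinAt (fun t => ∑ i ∈ Icc 1 n, √i * f i t)
      (∑ i ∈ Icc 1 n, √i * truncRBKField θ n (f · t) i) (Set.Ici t1) t := fun t ht =>
    (HasDerivWithinAt.fun_sum fun i hi => (hf i hi t (ht1.trans ht.1)).const_mul √i).mono
      (Set.Ici_subset_Ici.2 ht1)
  have hcont : ∀ i ∈ Icc r1 r2, ContinuousOn (f i) (Set.Icc t1 t2) := fun i hi t ht =>
    (hf i (Icc_subset_Icc hr1 hr2n hi) t (ht1.trans ht.1)).continuousWithinAt.mono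
      fun s hs => ht1.trans hs.1
  have hint : IntegrableOn (fun s => √r1 / 2 * (∑ i ∈ Icc r1 r2, ω i * f i s) ^ 2)
      (Set.Icc t1 t2) :=
    ((continuousOn_finsetSum _ fun i hi => (hcont i hi).const_smul (ω i)).pow 2
      |>.const_smul (√r1 / 2)).integrableOn_compact isCompact_Icc
  have hdecay := integral_le_of_hasDerivWithinAt_le_neg ht12 hmoment hint
    (fun t ht => sum_sqrt_mul_truncRBKField_le hr1 hr2n hω hθω
      fun i hi => hf_nonneg i hi t (ht1.trans ht.1.le))
    (sum_nonneg fun i hi => mul_nonneg (Real.sqrt_nonneg _) (hf_nonneg i hi t2 (ht1.trans ht12)))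
  rw [intervalIntegral.integral_const_mul] at hdecay
  have hr1_pos : 0 < √(r1 : ℝ) := Real.sqrt_pos.2 (by exact_mod_cast hr1)
  calc _ ≤ (∑ i ∈ Icc 1 n, √i * f i t1) / (√r1 / 2) := (le_div_iff₀' (by positivity)).2 hdecay
    _ = _ := by field_simp

/-- Under (K1), the nonnegative global solution of the truncated RBK system
satisfies, for `1 ≤ r1 ≤ r2 ≤ n` and `0 ≤ t1 ≤ t2`,
`∫_{t1}^{t2} (∑_{i=r1}^{r2} ω_i f_i(s))² ds ≤ 2 r1^{−1/2} ∑_{i=1}^n i^{1/2} f_i(t1)`. -/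
theorem truncRBK_L2_omega_estimate
    (θ : ℕ → ℕ → ℝ) (ω : ℕ → ℝ) (κ : ℕ → ℕ → ℝ)
    (hθ_symm : ∀ i j : ℕ, 1 ≤ i → 1 ≤ j → θ i j = θ j i)
    -- (K1)
    (hK1 : ∀ i j : ℕ, 1 ≤ i → 1 ≤ j → θ i j = ω i * ω j + κ i j)
    (hω_nonneg : ∀ i : ℕ, 1 ≤ i → 0 ≤ ω i)
    (hκ_nonneg : ∀ i j : ℕ, 1 ≤ i → 1 ≤ j → 0 ≤ κ i j)
    (hκ_symm : ∀ i j : ℕ, 1 ≤ i → 1 ≤ j → κ i j = κ j i)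
    (n : ℕ) (hn : 2 ≤ n)
    (fin : ℕ → ℝ) (hfin : ∀ i ∈ Finset.Icc 1 n, 0 ≤ fin i)
    (f : ℕ → ℝ → ℝ) (hf : IsTruncRBKOn θ n (Set.Ici 0) f)
    (hinit : ∀ i ∈ Finset.Icc 1 n, f i 0 = fin i)
    (hf_nonneg : ∀ i ∈ Finset.Icc 1 n, ∀ t ∈ Set.Ici (0:ℝ), 0 ≤ f i t)
    (r1 r2 : ℕ) (hr1 : 1 ≤ r1) (hr12 : r1 ≤ r2) (hr2n : r2 ≤ n)
    (t1 t2 : ℝ) (ht1 : 0 ≤ t1) (ht12 : t1 ≤ t2) :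
    ∫ s in t1..t2, (∑ i ∈ Finset.Icc r1 r2, ω i * f i s) ^ 2
      ≤ 2 * (Real.sqrt r1)⁻¹ * ∑ i ∈ Finset.Icc 1 n, Real.sqrt i * f i t1 :=
  truncRBK_L2_omega_estimate_general θ ω κ hK1 hω_nonneg hκ_nonneg n f hf hf_nonneg r1 r2 hr1 hr2n
    t1 t2 ht1 ht12
end

section
/- Let n ≥ 2, let (θ_{i,j})_{i,j≥1} be a coagulation kernel, and let f^n = (f_i^n)_{1≤i≤n} be the nonnegative global solution of the truncated RBK system with nonnegative initial data. Then for every i ∈ {1,…,n} and every t ∈ [0,∞), f_i^n(t) ≤ Σ_{j=1}^{n} f_j^n(t) ≤ Σ_{j=1}^{n} f_j^{n,in}. -/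
/-!
Summing the equations, the total number of clusters `∑ⱼ fⱼ` has derivative
`∑ᵢ ∑_{j ≤ n-i} θ_{i+j,j} f_{i+j} f_j - ∑ᵢ ∑ⱼ θ_{i,j} f_i f_j`. Reindexing the gain term by
`(i, j) ↦ (i + j, j)` exhibits it as a sub-sum of the loss term, so for nonnegative data the
total is nonincreasing; each `fᵢ` is one of its nonnegative summands.
-/

open MeasureTheory Finset Filter

theorem sum_Icc_sum_Icc_sub_add_le {β : Type*} [AddCommMonoid β] [PartialOrder β]
    [IsOrderedAddMonoid β] (n : ℕ) {g : ℕ → ℕ → β}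
    (hg : ∀ k ∈ Icc 1 n, ∀ j ∈ Icc 1 n, 0 ≤ g k j) :
    ∑ k ∈ Icc 1 n, ∑ j ∈ Icc 1 (n - k), g (k + j) j ≤ ∑ k ∈ Icc 1 n, ∑ j ∈ Icc 1 n, g k j := by
  rw [sum_comm' (t' := Icc 1 n) (s' := fun j => Icc 1 (n - j))
    (fun k j => by simp only [mem_Icc]; omega), sum_comm]
  refine sum_le_sum fun j hj => ?_
  rw [mem_Icc] at hj
  calc ∑ k ∈ Icc 1 (n - j), g (k + j) j = ∑ m ∈ Icc (1 + j) (n - j + j), g m j := by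
        rw [← map_add_right_Icc, sum_map]
        rfl
    _ ≤ ∑ m ∈ Icc 1 n, g m j :=
        sum_le_sum_of_subset_of_nonneg (Icc_subset_Icc (by omega) (by omega))
          fun m hm _ => hg m hm j (mem_Icc.2 hj)

theorem sum_truncRBK_gain_sub_loss_nonpos {θ : ℕ → ℕ → ℝ}
    (hθ : ∀ i j : ℕ, 1 ≤ i → 1 ≤ j → 0 ≤ θ i j) (n : ℕ) {x : ℕ → ℝ}
    (hx : ∀ i ∈ Icc 1 n, 0 ≤ x i) :
    ∑ i ∈ Icc 1 n, ((∑ j ∈ Icc 1 (n - i), θ (i + j) j * x (i + j) * x j)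
      - ∑ j ∈ Icc 1 n, θ i j * x i * x j) ≤ 0 := by
  rw [sum_sub_distrib, sub_nonpos]
  exact sum_Icc_sum_Icc_sub_add_le n (g := fun k j => θ k j * x k * x j) fun k hk j hj =>
    mul_nonneg (mul_nonneg (hθ k j (mem_Icc.1 hk).1 (mem_Icc.1 hj).1) (hx k hk)) (hx j hj)

namespace IsTruncRBKOn

variable {θ : ℕ → ℕ → ℝ} {n : ℕ} {I : Set ℝ} {f : ℕ → ℝ → ℝ}

theorem hasDerivWithinAt_sum (hf : IsTruncRBKOn θ n I f) {t : ℝ} (ht : t ∈ I) :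
    HasDerivWithinAt (fun s => ∑ i ∈ Icc 1 n, f i s)
      (∑ i ∈ Icc 1 n, ((∑ j ∈ Icc 1 (n - i), θ (i + j) j * f (i + j) t * f j t)
        - ∑ j ∈ Icc 1 n, θ i j * f i t * f j t)) I t :=
  HasDerivWithinAt.fun_sum fun i hi => hf i hi t ht

theorem antitoneOn_sum (hf : IsTruncRBKOn θ n I f) (hI : Convex ℝ I)
    (hθ : ∀ i j : ℕ, 1 ≤ i → 1 ≤ j → 0 ≤ θ i j)
    (hf_nonneg : ∀ i ∈ Icc 1 n, ∀ t ∈ I, 0 ≤ f i t) :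
    AntitoneOn (fun t => ∑ i ∈ Icc 1 n, f i t) I :=
  antitoneOn_of_hasDerivWithinAt_nonpos hI
    (fun _ ht => (hf.hasDerivWithinAt_sum ht).continuousWithinAt)
    (fun _ ht => (hf.hasDerivWithinAt_sum (interior_subset ht)).mono interior_subset)
    fun t ht => sum_truncRBK_gain_sub_loss_nonpos hθ n (x := fun j => f j t)
      fun i hi => hf_nonneg i hi t (interior_subset ht)

end IsTruncRBKOn

theorem truncRBK_pointwise_bound_general
    (θ : ℕ → ℕ → ℝ)
    (hθ_nonneg : ∀ i j : ℕ, 1 ≤ i → 1 ≤ j → 0 ≤ θ i j)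
    (n : ℕ)
    (fin : ℕ → ℝ)
    (f : ℕ → ℝ → ℝ) (hf : IsTruncRBKOn θ n (Set.Ici 0) f)
    (hinit : ∀ i ∈ Finset.Icc 1 n, f i 0 = fin i)
    (hf_nonneg : ∀ i ∈ Finset.Icc 1 n, ∀ t ∈ Set.Ici (0:ℝ), 0 ≤ f i t)
    (i : ℕ) (hi : i ∈ Finset.Icc 1 n) (t : ℝ) (ht : 0 ≤ t) :
    f i t ≤ ∑ j ∈ Finset.Icc 1 n, f j t
      ∧ ∑ j ∈ Finset.Icc 1 n, f j t ≤ ∑ j ∈ Finset.Icc 1 n, fin j := by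
  refine ⟨single_le_sum (fun j hj => hf_nonneg j hj t ht) hi, ?_⟩
  calc ∑ j ∈ Icc 1 n, f j t ≤ ∑ j ∈ Icc 1 n, f j 0 :=
        hf.antitoneOn_sum (convex_Ici 0) hθ_nonneg hf_nonneg Set.self_mem_Ici ht ht
    _ = ∑ j ∈ Icc 1 n, fin j := sum_congr rfl hinit

/-- For the nonnegative global solution of the truncated RBK system,
each component is dominated by the total number of clusters, which itself is dominated by
its initial value: `f_i(t) ≤ ∑_{j=1}^n f_j(t) ≤ ∑_{j=1}^n fin_j` for `t ≥ 0`. -/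
theorem truncRBK_pointwise_bound
    (θ : ℕ → ℕ → ℝ)
    (hθ_nonneg : ∀ i j : ℕ, 1 ≤ i → 1 ≤ j → 0 ≤ θ i j)
    (hθ_symm : ∀ i j : ℕ, 1 ≤ i → 1 ≤ j → θ i j = θ j i)
    (n : ℕ) (hn : 2 ≤ n)
    (fin : ℕ → ℝ) (hfin : ∀ i ∈ Finset.Icc 1 n, 0 ≤ fin i)
    (f : ℕ → ℝ → ℝ) (hf : IsTruncRBKOn θ n (Set.Ici 0) f)
    (hinit : ∀ i ∈ Finset.Icc 1 n, f i 0 = fin i)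
    (hf_nonneg : ∀ i ∈ Finset.Icc 1 n, ∀ t ∈ Set.Ici (0:ℝ), 0 ≤ f i t)
    (i : ℕ) (hi : i ∈ Finset.Icc 1 n) (t : ℝ) (ht : 0 ≤ t) :
    f i t ≤ ∑ j ∈ Finset.Icc 1 n, f j t
      ∧ ∑ j ∈ Finset.Icc 1 n, f j t ≤ ∑ j ∈ Finset.Icc 1 n, fin j :=
  truncRBK_pointwise_bound_general θ hθ_nonneg n fin f hf hinit hf_nonneg i hi t ht
end

section
/- Let n ≥ 2, let (θ_{i,j})_{i,j≥1} be a coagulation kernel satisfying (K1) and (K3), and let f^n = (f_i^n)_{1≤i≤n} be the nonnegative global solution of the truncated RBK system with nonnegative initial data. Then for every i ∈ {1,…,n} and every T ∈ (0,∞), ‖f_i^n‖_{L^1(0,T)} + ‖df_i^n/dt‖_{L^1(0,T)} ≤ T Σ_{j=1}^{n} f_j^{n,in} + 4(1+A) Σ_{j=1}^{n} f_j^{n,in}; in particular the W^{1,1}(0,T)-norm of f_i^n is bounded by a constant depending only on T, A and Σ_{j=1}^{n} f_j^{n,in}. -/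
/-!
The total mass `M = ∑ₖ f_k` has derivative `∑ₖ gain_k - ∑ₖ loss_k`. Every gain term
`θ_{k+j,j} f_{k+j} f_j` occurs twice among the loss terms, as the pairs `(k+j, j)` and `(j, k+j)`,
so `2 ∑ gain ≤ ∑ loss` and `M' ≤ -½ ∑ loss`. Hence `M` is nonincreasing and
`∫₀ᵀ ∑ loss ≤ 2 M(0)`. This bounds `‖f_i‖_{L¹(0,T)}` by `T M(0)`, and since
`|df_i/dt| ≤ gain_i + loss_i ≤ 2 ∑ loss`, it bounds `‖df_i/dt‖_{L¹(0,T)}` by `4 M(0)`.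
-/

open MeasureTheory Finset Filter

theorem Finset.sum_Icc_sum_Icc_sub_eq_sum_filter_lt {M : Type*} [AddCommMonoid M] (n : ℕ)
    (a : ℕ → ℕ → M) :
    ∑ k ∈ Icc 1 n, ∑ j ∈ Icc 1 (n - k), a (k + j) j
      = ∑ p ∈ (Icc 1 n ×ˢ Icc 1 n).filter (fun p => p.2 < p.1), a p.1 p.2 := by
  rw [sum_sigma']
  refine sum_nbij' (fun x => (x.1 + x.2, x.2)) (fun p => ⟨p.1 - p.2, p.2⟩)
    ?_ ?_ ?_ ?_ fun _ _ => rfl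
  · rintro ⟨k, j⟩ h
    simp only [mem_sigma, mem_filter, mem_product, mem_Icc] at h ⊢
    omega
  · rintro ⟨p, j⟩ h
    simp only [mem_sigma, mem_filter, mem_product, mem_Icc] at h ⊢
    omega
  · rintro ⟨k, j⟩ _
    simp
  · rintro ⟨p, j⟩ h
    simp only [mem_filter, mem_product, mem_Icc] at h
    simp only [Prod.mk.injEq, and_true]
    omega

theorem Finset.two_mul_sum_Icc_sum_Icc_sub_le (n : ℕ) (a : ℕ → ℕ → ℝ)
    (ha : ∀ k ∈ Icc 1 n, ∀ j ∈ Icc 1 n, 0 ≤ a k j)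
    (hsymm : ∀ k ∈ Icc 1 n, ∀ j ∈ Icc 1 n, a k j = a j k) :
    2 * ∑ k ∈ Icc 1 n, ∑ j ∈ Icc 1 (n - k), a (k + j) j
      ≤ ∑ k ∈ Icc 1 n, ∑ j ∈ Icc 1 n, a k j := by
  set s := Icc 1 n ×ˢ Icc 1 n
  have hlower := sum_Icc_sum_Icc_sub_eq_sum_filter_lt n a
  have hupper : ∑ p ∈ s.filter (fun p => p.2 < p.1), a p.1 p.2
      = ∑ p ∈ s.filter (fun p => p.1 < p.2), a p.1 p.2 := by
    refine sum_nbij' Prod.swap Prod.swap ?_ ?_ (fun _ _ => rfl) (fun _ _ => rfl) ?_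
    · simp +contextual [s]
    · simp +contextual [s]
    · intro p hp
      simp only [s, mem_filter, mem_product] at hp
      exact hsymm _ hp.1.1 _ hp.1.2
  calc 2 * ∑ k ∈ Icc 1 n, ∑ j ∈ Icc 1 (n - k), a (k + j) j
      = ∑ p ∈ s.filter (fun p => p.2 < p.1), a p.1 p.2
        + ∑ p ∈ s.filter (fun p => p.1 < p.2), a p.1 p.2 := by rw [two_mul, hlower, hupper]
    _ ≤ ∑ p ∈ s.filter (fun p => p.2 < p.1), a p.1 p.2
        + ∑ p ∈ s.filter (fun p => ¬ p.2 < p.1), a p.1 p.2 := by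
      gcongr _ + ?_
      refine sum_le_sum_of_subset_of_nonneg (fun p hp => ?_) fun p hp _ => ?_
      · simp only [mem_filter] at hp ⊢
        exact ⟨hp.1, by omega⟩
      · simp only [s, mem_filter, mem_product] at hp
        exact ha _ hp.1.1 _ hp.1.2
    _ = ∑ k ∈ Icc 1 n, ∑ j ∈ Icc 1 n, a k j := by
      rw [sum_filter_add_sum_filter_not, sum_product]

def truncRBKGain (θ : ℕ → ℕ → ℝ) (n : ℕ) (f : ℕ → ℝ → ℝ) (i : ℕ) (t : ℝ) : ℝ :=
  ∑ j ∈ Icc 1 (n - i), θ (i + j) j * f (i + j) t * f j t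

def truncRBKLoss (θ : ℕ → ℕ → ℝ) (n : ℕ) (f : ℕ → ℝ → ℝ) (i : ℕ) (t : ℝ) : ℝ :=
  ∑ j ∈ Icc 1 n, θ i j * f i t * f j t

def truncRBKMass (n : ℕ) (f : ℕ → ℝ → ℝ) (t : ℝ) : ℝ :=
  ∑ i ∈ Icc 1 n, f i t

section TruncRBK

variable {θ : ℕ → ℕ → ℝ} {n : ℕ} {f : ℕ → ℝ → ℝ} {t : ℝ}

theorem truncRBKGain_nonneg (hθ : ∀ i j, 1 ≤ i → 1 ≤ j → 0 ≤ θ i j)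
    (hft : ∀ i ∈ Icc 1 n, 0 ≤ f i t) (i : ℕ) : 0 ≤ truncRBKGain θ n f i t := by
  refine sum_nonneg fun j hj => ?_
  have hj' := mem_Icc.1 hj
  exact mul_nonneg (mul_nonneg (hθ _ _ (by omega) hj'.1) (hft _ (mem_Icc.2 ⟨by omega, by omega⟩)))
    (hft _ (mem_Icc.2 ⟨hj'.1, by omega⟩))

theorem truncRBKLoss_nonneg (hθ : ∀ i j, 1 ≤ i → 1 ≤ j → 0 ≤ θ i j)
    (hft : ∀ i ∈ Icc 1 n, 0 ≤ f i t) {i : ℕ} (hi : i ∈ Icc 1 n) :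
    0 ≤ truncRBKLoss θ n f i t :=
  sum_nonneg fun j hj => mul_nonneg
    (mul_nonneg (hθ _ _ (mem_Icc.1 hi).1 (mem_Icc.1 hj).1) (hft i hi)) (hft j hj)

theorem two_mul_sum_truncRBKGain_le_sum_truncRBKLoss
    (hθ_symm : ∀ i j, 1 ≤ i → 1 ≤ j → θ i j = θ j i) (hθ : ∀ i j, 1 ≤ i → 1 ≤ j → 0 ≤ θ i j)
    (hft : ∀ i ∈ Icc 1 n, 0 ≤ f i t) :
    2 * ∑ i ∈ Icc 1 n, truncRBKGain θ n f i t ≤ ∑ i ∈ Icc 1 n, truncRBKLoss θ n f i t :=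
  two_mul_sum_Icc_sum_Icc_sub_le n (fun k j => θ k j * f k t * f j t)
    (fun k hk j hj => mul_nonneg
      (mul_nonneg (hθ _ _ (mem_Icc.1 hk).1 (mem_Icc.1 hj).1) (hft k hk)) (hft j hj))
    (fun k hk j hj => by
      simp only [hθ_symm k j (mem_Icc.1 hk).1 (mem_Icc.1 hj).1]
      ring)

theorem abs_truncRBKGain_sub_truncRBKLoss_le (hθ_symm : ∀ i j, 1 ≤ i → 1 ≤ j → θ i j = θ j i)
    (hθ : ∀ i j, 1 ≤ i → 1 ≤ j → 0 ≤ θ i j) (hft : ∀ i ∈ Icc 1 n, 0 ≤ f i t)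
    {i : ℕ} (hi : i ∈ Icc 1 n) :
    |truncRBKGain θ n f i t - truncRBKLoss θ n f i t|
      ≤ 2 * ∑ k ∈ Icc 1 n, truncRBKLoss θ n f k t := by
  have hgain := single_le_sum (fun k _ => truncRBKGain_nonneg hθ hft k) hi
  have hloss := single_le_sum (fun k hk => truncRBKLoss_nonneg hθ hft hk) hi
  have htotal := two_mul_sum_truncRBKGain_le_sum_truncRBKLoss hθ_symm hθ hft
  have := truncRBKGain_nonneg hθ hft i
  have := truncRBKLoss_nonneg hθ hft hi
  rw [abs_le]
  constructor <;> linarith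


namespace IsTruncRBKOn

variable {I : Set ℝ}

theorem continuousOn_s12 (hf : IsTruncRBKOn θ n I f) {i : ℕ} (hi : i ∈ Icc 1 n) :
    ContinuousOn (f i) I :=
  fun t ht => (hf i hi t ht).continuousWithinAt

theorem continuousOn_truncRBKGain (hf : IsTruncRBKOn θ n I f) (i : ℕ) :
    ContinuousOn (truncRBKGain θ n f i) I := by
  refine continuousOn_finsetSum _ fun j hj => ?_
  have hj' := mem_Icc.1 hj
  exact (continuousOn_const.mul (hf.continuousOn_s12 (mem_Icc.2 ⟨by omega, by omega⟩))).mul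
    (hf.continuousOn_s12 (mem_Icc.2 ⟨hj'.1, by omega⟩))

theorem continuousOn_truncRBKLoss (hf : IsTruncRBKOn θ n I f) {i : ℕ} (hi : i ∈ Icc 1 n) :
    ContinuousOn (truncRBKLoss θ n f i) I :=
  continuousOn_finsetSum _ fun _ hj =>
    (continuousOn_const.mul (hf.continuousOn_s12 hi)).mul (hf.continuousOn_s12 hj)

theorem hasDerivWithinAt_truncRBKMass (hf : IsTruncRBKOn θ n I f) (ht : t ∈ I) :
    HasDerivWithinAt (truncRBKMass n f)
      (∑ i ∈ Icc 1 n, (truncRBKGain θ n f i t - truncRBKLoss θ n f i t)) I t :=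
  HasDerivWithinAt.fun_sum fun i hi => hf i hi t ht

theorem integral_sum_truncRBKLoss_le (hf : IsTruncRBKOn θ n (Set.Ici 0) f)
    (hθ_symm : ∀ i j, 1 ≤ i → 1 ≤ j → θ i j = θ j i) (hθ : ∀ i j, 1 ≤ i → 1 ≤ j → 0 ≤ θ i j)
    (hf_nonneg : ∀ i ∈ Icc 1 n, ∀ t ∈ Set.Ici (0 : ℝ), 0 ≤ f i t) (ht : 0 ≤ t) :
    ∫ s in (0 : ℝ)..t, ∑ i ∈ Icc 1 n, truncRBKLoss θ n f i s
      ≤ 2 * (truncRBKMass n f 0 - truncRBKMass n f t) := by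
  have hIcc : Set.Icc 0 t ⊆ Set.Ici (0 : ℝ) := Set.Icc_subset_Ici_self
  have hmass := fun s (hs : s ∈ Set.Ici (0 : ℝ)) =>
    (hf.hasDerivWithinAt_truncRBKMass hs).const_mul (-2)
  -- Compare `∑ loss` with the derivative `2 (∑ loss - ∑ gain)` of `-2 M`.
  have hintegral := intervalIntegral.integral_le_sub_of_hasDeriv_right_of_le ht
    (fun s hs => (hmass s (hIcc hs)).continuousWithinAt.mono hIcc)
    (fun s hs => (hmass s (le_of_lt hs.1)).mono (Set.Ioi_subset_Ici hs.1.le))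
    ((continuousOn_finsetSum _ fun i hi =>
      (hf.continuousOn_truncRBKLoss hi).mono hIcc).integrableOn_Icc)
    (fun s hs => by
      have := two_mul_sum_truncRBKGain_le_sum_truncRBKLoss hθ_symm hθ
        (fun i hi => hf_nonneg i hi s (le_of_lt hs.1))
      rw [sum_sub_distrib]
      linarith)
  linarith

theorem truncRBKMass_le (hf : IsTruncRBKOn θ n (Set.Ici 0) f)
    (hθ_symm : ∀ i j, 1 ≤ i → 1 ≤ j → θ i j = θ j i) (hθ : ∀ i j, 1 ≤ i → 1 ≤ j → 0 ≤ θ i j)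
    (hf_nonneg : ∀ i ∈ Icc 1 n, ∀ t ∈ Set.Ici (0 : ℝ), 0 ≤ f i t) (ht : 0 ≤ t) :
    truncRBKMass n f t ≤ truncRBKMass n f 0 := by
  have hloss := intervalIntegral.integral_nonneg (μ := volume) ht fun s hs =>
    sum_nonneg fun i hi => truncRBKLoss_nonneg hθ (fun k hk => hf_nonneg k hk s hs.1) hi
  linarith [hf.integral_sum_truncRBKLoss_le hθ_symm hθ hf_nonneg ht]

theorem integral_abs_le (hf : IsTruncRBKOn θ n (Set.Ici 0) f)
    (hθ_symm : ∀ i j, 1 ≤ i → 1 ≤ j → θ i j = θ j i) (hθ : ∀ i j, 1 ≤ i → 1 ≤ j → 0 ≤ θ i j)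
    (hf_nonneg : ∀ i ∈ Icc 1 n, ∀ t ∈ Set.Ici (0 : ℝ), 0 ≤ f i t) {i : ℕ} (hi : i ∈ Icc 1 n)
    {T : ℝ} (hT : 0 ≤ T) :
    ∫ s in (0 : ℝ)..T, |f i s| ≤ T * truncRBKMass n f 0 := by
  have hbound : ∀ s ∈ Set.Icc 0 T, |f i s| ≤ truncRBKMass n f 0 := fun s hs => by
    rw [abs_of_nonneg (hf_nonneg i hi s hs.1)]
    exact (single_le_sum (fun k hk => hf_nonneg k hk s hs.1) hi).trans
      (hf.truncRBKMass_le hθ_symm hθ hf_nonneg hs.1)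
  calc ∫ s in (0 : ℝ)..T, |f i s| ≤ ∫ _ in (0 : ℝ)..T, truncRBKMass n f 0 :=
        intervalIntegral.integral_mono_on hT
          (((hf.continuousOn_s12 hi).mono Set.Icc_subset_Ici_self).abs.intervalIntegrable_of_Icc hT)
          intervalIntegrable_const hbound
    _ = T * truncRBKMass n f 0 := by simp

theorem integral_abs_truncRBKGain_sub_truncRBKLoss_le (hf : IsTruncRBKOn θ n (Set.Ici 0) f)
    (hθ_symm : ∀ i j, 1 ≤ i → 1 ≤ j → θ i j = θ j i) (hθ : ∀ i j, 1 ≤ i → 1 ≤ j → 0 ≤ θ i j)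
    (hf_nonneg : ∀ i ∈ Icc 1 n, ∀ t ∈ Set.Ici (0 : ℝ), 0 ≤ f i t) {i : ℕ} (hi : i ∈ Icc 1 n)
    {T : ℝ} (hT : 0 ≤ T) :
    ∫ s in (0 : ℝ)..T, |truncRBKGain θ n f i s - truncRBKLoss θ n f i s|
      ≤ 4 * truncRBKMass n f 0 := by
  have hIcc : Set.Icc 0 T ⊆ Set.Ici (0 : ℝ) := Set.Icc_subset_Ici_self
  have hS := (continuousOn_finsetSum _ fun k hk =>
    (hf.continuousOn_truncRBKLoss hk).mono hIcc).intervalIntegrable_of_Icc (μ := volume) hT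
  calc ∫ s in (0 : ℝ)..T, |truncRBKGain θ n f i s - truncRBKLoss θ n f i s|
      ≤ ∫ s in (0 : ℝ)..T, 2 * ∑ k ∈ Icc 1 n, truncRBKLoss θ n f k s :=
        intervalIntegral.integral_mono_on hT
          ((((hf.continuousOn_truncRBKGain i).sub (hf.continuousOn_truncRBKLoss hi)).mono
            hIcc).abs.intervalIntegrable_of_Icc hT) (hS.const_mul 2)
          fun s hs => abs_truncRBKGain_sub_truncRBKLoss_le hθ_symm hθ
            (fun k hk => hf_nonneg k hk s hs.1) hi
    _ = 2 * ∫ s in (0 : ℝ)..T, ∑ k ∈ Icc 1 n, truncRBKLoss θ n f k s :=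
        intervalIntegral.integral_const_mul 2 _
    _ ≤ 4 * truncRBKMass n f 0 := by
      have hmass_T : 0 ≤ truncRBKMass n f T := sum_nonneg fun k hk => hf_nonneg k hk T hT
      linarith [hf.integral_sum_truncRBKLoss_le hθ_symm hθ hf_nonneg hT]

end IsTruncRBKOn

end TruncRBK

theorem truncRBK_W11_bound_general
    (θ : ℕ → ℕ → ℝ) (ω : ℕ → ℝ) (κ : ℕ → ℕ → ℝ)
    (hθ_symm : ∀ i j : ℕ, 1 ≤ i → 1 ≤ j → θ i j = θ j i)
    -- (K1)
    (hK1 : ∀ i j : ℕ, 1 ≤ i → 1 ≤ j → θ i j = ω i * ω j + κ i j)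
    (hω_nonneg : ∀ i : ℕ, 1 ≤ i → 0 ≤ ω i)
    (hκ_nonneg : ∀ i j : ℕ, 1 ≤ i → 1 ≤ j → 0 ≤ κ i j)
    -- (K3)
    (A : ℝ) (hA : 0 < A)
    (n : ℕ)
    (fin : ℕ → ℝ)
    (f : ℕ → ℝ → ℝ) (hf : IsTruncRBKOn θ n (Set.Ici 0) f)
    (hinit : ∀ i ∈ Finset.Icc 1 n, f i 0 = fin i)
    (hf_nonneg : ∀ i ∈ Finset.Icc 1 n, ∀ t ∈ Set.Ici (0:ℝ), 0 ≤ f i t)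
    (i : ℕ) (hi : i ∈ Finset.Icc 1 n) (T : ℝ) (hT : 0 < T) :
    (∫ s in (0:ℝ)..T, |f i s|)
      + (∫ s in (0:ℝ)..T,
          |(∑ j ∈ Finset.Icc 1 (n - i), θ (i + j) j * f (i + j) s * f j s)
            - ∑ j ∈ Finset.Icc 1 n, θ i j * f i s * f j s|)
      ≤ T * (∑ j ∈ Finset.Icc 1 n, fin j) + 4 * (1 + A) * ∑ j ∈ Finset.Icc 1 n, fin j := by
  have hθ : ∀ i j, 1 ≤ i → 1 ≤ j → 0 ≤ θ i j := fun i j hi hj => by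
    rw [hK1 i j hi hj]
    exact add_nonneg (mul_nonneg (hω_nonneg i hi) (hω_nonneg j hj)) (hκ_nonneg i j hi hj)
  have hmass : truncRBKMass n f 0 = ∑ j ∈ Icc 1 n, fin j := sum_congr rfl hinit
  have hmass_nonneg : 0 ≤ truncRBKMass n f 0 :=
    sum_nonneg fun j hj => hf_nonneg j hj 0 Set.self_mem_Ici
  calc _ ≤ T * truncRBKMass n f 0 + 4 * truncRBKMass n f 0 :=
        add_le_add (hf.integral_abs_le hθ_symm hθ hf_nonneg hi hT.le)
          (hf.integral_abs_truncRBKGain_sub_truncRBKLoss_le hθ_symm hθ hf_nonneg hi hT.le)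
    _ ≤ _ := by
      rw [← hmass]
      linarith [mul_nonneg hA.le hmass_nonneg]

/-- Under (K1) and (K3), the nonnegative global solution of the truncated
RBK system satisfies, for every `1 ≤ i ≤ n` and `T > 0`, the `W^{1,1}(0,T)` bound
`‖f_i‖_{L¹(0,T)} + ‖df_i/dt‖_{L¹(0,T)} ≤ T ∑_{j=1}^n fin_j + 4(1+A) ∑_{j=1}^n fin_j`
(the derivative being the right-hand side of the system). -/
theorem truncRBK_W11_bound
    (θ : ℕ → ℕ → ℝ) (ω : ℕ → ℝ) (κ : ℕ → ℕ → ℝ)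
    (hθ_symm : ∀ i j : ℕ, 1 ≤ i → 1 ≤ j → θ i j = θ j i)
    -- (K1)
    (hK1 : ∀ i j : ℕ, 1 ≤ i → 1 ≤ j → θ i j = ω i * ω j + κ i j)
    (hω_nonneg : ∀ i : ℕ, 1 ≤ i → 0 ≤ ω i)
    (hκ_nonneg : ∀ i j : ℕ, 1 ≤ i → 1 ≤ j → 0 ≤ κ i j)
    (hκ_symm : ∀ i j : ℕ, 1 ≤ i → 1 ≤ j → κ i j = κ j i)
    -- (K3)
    (R A : ℝ) (hR : 0 < R) (hA : 0 < A)
    (hωR : ∀ i : ℕ, 1 ≤ i → R * i ≤ ω i)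
    (hκA : ∀ i j : ℕ, 1 ≤ i → 1 ≤ j → κ i j ≤ A * (ω i * ω j))
    (n : ℕ) (hn : 2 ≤ n)
    (fin : ℕ → ℝ) (hfin : ∀ i ∈ Finset.Icc 1 n, 0 ≤ fin i)
    (f : ℕ → ℝ → ℝ) (hf : IsTruncRBKOn θ n (Set.Ici 0) f)
    (hinit : ∀ i ∈ Finset.Icc 1 n, f i 0 = fin i)
    (hf_nonneg : ∀ i ∈ Finset.Icc 1 n, ∀ t ∈ Set.Ici (0:ℝ), 0 ≤ f i t)
    (i : ℕ) (hi : i ∈ Finset.Icc 1 n) (T : ℝ) (hT : 0 < T) :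
    (∫ s in (0:ℝ)..T, |f i s|)
      + (∫ s in (0:ℝ)..T,
          |(∑ j ∈ Finset.Icc 1 (n - i), θ (i + j) j * f (i + j) s * f j s)
            - ∑ j ∈ Finset.Icc 1 n, θ i j * f i s * f j s|)
      ≤ T * (∑ j ∈ Finset.Icc 1 n, fin j) + 4 * (1 + A) * ∑ j ∈ Finset.Icc 1 n, fin j :=
  truncRBK_W11_bound_general θ ω κ hθ_symm hK1 hω_nonneg hκ_nonneg A hA n fin f hf hinit hf_nonneg i
    hi T hT
end
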